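/- Fix I ⊆ [d−1] and J ⊆ [d'−1], and let 𝒮_{I,J} be the set of σ ∈ 𝒮_{2d'} with (I,σ) ∈ W_d, J_σ = J, and w_σ = 0^{d'}1^{d'}. Then H_{I,J} equals the disjoint union over σ ∈ 𝒮_{I,J} of the sets G_{I,σ}. -/

import Mathlib

open scoped Classical

namespace FreeNilpotent

/-- `d' = binom(d,2)`, the rank of the derived subalgebra of `f_{2,d}`. -/
def d' (d : ℕ) : ℕ := d * (d - 1) / 2

/-- The indexing bijection `b` on pairs: `b(i,j) = d' + j − 1 + (i−1)(2d−2−i)/2`. -/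
def bmap (d i j : ℕ) : ℕ := d' d + j - 1 + (i - 1) * (2 * d - 2 - i) / 2

/-- The set of pairs `(i,j)` with `1 ≤ i < j ≤ d`. -/
def pairs (d : ℕ) : Finset (ℕ × ℕ) :=
  (Finset.Icc 1 d ×ˢ Finset.Icc 1 d).filter fun p => p.1 < p.2

/-- The corresponding tuple `v_i ∈ ℕ₀^{d+d'}` (1-based coordinates `l`):
for `i ∈ [d']`, `v_i = (0^{d+i−1}, 1^{d'−i+1})`; for `i = b(j,k)` with `j < k ≤ d`,
`v_i = (0^{j−1}, 1^{k−j}, 2^{d−k+1}, 0^{d'})`. -/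
def v (d i l : ℕ) : ℕ :=
  if i ≤ d' d then (if d + i ≤ l ∧ l ≤ d + d' d then 1 else 0)
  else ∑ p ∈ (pairs d).filter (fun p => bmap d p.1 p.2 = i),
    ((if p.1 ≤ l ∧ l ≤ d then 1 else 0) + (if p.2 ≤ l ∧ l ≤ d then 1 else 0))

/-- `σ : ℕ → ℕ` is (the one-line form of) a permutation of `[2d'] = {1, …, 2d'}`. -/
def IsPermOn (d : ℕ) (σ : ℕ → ℕ) : Prop :=
  Set.BijOn σ (Set.Icc 1 (2 * d' d)) (Set.Icc 1 (2 * d' d))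

/-- Membership in the set `𝒮_{2d'}` of permutations. -/
def memS (d : ℕ) (σ : ℕ → ℕ) : Prop :=
  IsPermOn d σ ∧
  (∀ i ∈ Finset.Icc 1 (2 * d' d),
    ((Finset.Icc 1 i).filter fun l => σ l ≤ d' d).card ≤
      ((Finset.Icc 1 i).filter fun l => d' d < σ l).card) ∧
  (∀ i j, 1 ≤ i → i < j → j ≤ 2 * d' d → σ i ≤ d' d → σ j ≤ d' d → σ j < σ i →
    ∀ k, i ≤ k → k < j → σ (k + 1) < σ k)

/-- The linear form `∑_j w^σ_{i,j} r_j + ∑_j w^σ_{i,d+j} s_j` with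
`w^σ_{i,·} = v_{σ(i)} − v_{σ(i+1)}`. -/
def wform (d : ℕ) (σ : ℕ → ℕ) (i : ℕ) (r s : ℕ → ℕ) : ℤ :=
  (∑ j ∈ Finset.Icc 1 d, ((v d (σ i) j : ℤ) - (v d (σ (i + 1)) j : ℤ)) * (r j : ℤ)) +
    ∑ j ∈ Finset.Icc 1 (d' d),
      ((v d (σ i) (d + j) : ℤ) - (v d (σ (i + 1)) (d + j) : ℤ)) * (s j : ℤ)

/-- Membership of a tuple `(r,s) ∈ ℕ₀^{d+d'}` (encoded as functions with
`r` supported on `[d]` and `s` on `[d']`) in the set `G_{I,σ}`. -/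
def memG (d : ℕ) (I : Finset ℕ) (σ : ℕ → ℕ) (r s : ℕ → ℕ) : Prop :=
  (∀ i ∈ I, 0 < r i) ∧
  (∀ i, 1 ≤ i → i ≤ d - 1 → i ∉ I → r i = 0) ∧
  (∀ i, 1 ≤ i → i ≤ 2 * d' d - 1 → σ i < σ (i + 1) → 0 < wform d σ i r s) ∧
  (∀ i, 1 ≤ i → i ≤ 2 * d' d - 1 → σ (i + 1) < σ i → 0 ≤ wform d σ i r s) ∧
  (∀ j, d < j → r j = 0) ∧ (∀ j, d' d < j → s j = 0)

/-- Membership of `(I,σ)` in the set `𝒲_d`: `I ⊆ [d−1]`, `σ ∈ 𝒮_{2d'}`, and the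
associated system has nonzero solutions (equivalently, `G_{I,σ}` is nonempty). -/
def memW (d : ℕ) (I : Finset ℕ) (σ : ℕ → ℕ) : Prop :=
  I ⊆ Finset.Icc 1 (d - 1) ∧ memS d σ ∧ ∃ r s, memG d I σ r s

/-- `j ∈ J_σ`, i.e. `σ^{-1}(j) < σ^{-1}(j+1)`. -/
def Jmem (d : ℕ) (σ : ℕ → ℕ) (j : ℕ) : Prop :=
  Function.invFunOn σ (Set.Icc 1 (2 * d' d)) j <
    Function.invFunOn σ (Set.Icc 1 (2 * d' d)) (j + 1)

/-- Membership of a tuple `(r,s)` (with `r` supported on `[d]`, `s` on `[d']`) in the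
set `H_{I,J}`. -/
def memH (d : ℕ) (I J : Finset ℕ) (r s : ℕ → ℕ) : Prop :=
  (∀ i ∈ I, 0 < r i) ∧ (∀ i, 1 ≤ i → i ≤ d - 1 → i ∉ I → r i = 0) ∧
  (∀ j ∈ J, 0 < s j) ∧ (∀ j, 1 ≤ j → j ≤ d' d - 1 → j ∉ J → s j = 0) ∧
  (∑ j ∈ Finset.Icc 1 (d' d), s j) ≤ r (d - 1) + 2 * r d ∧
  (∀ j, d < j → r j = 0) ∧ (∀ j, d' d < j → s j = 0)

/-- `σ ∈ 𝒮_{I,J}`: `σ ∈ 𝒮_{2d'}` with `(I,σ) ∈ 𝒲_d`, `J_σ = J`, and trivial Dyck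
word `w_σ = 0^{d'}1^{d'}` (i.e. `σ(i) > d'` for `i ∈ [d']`). -/
def memSIJ (d : ℕ) (I J : Finset ℕ) (σ : ℕ → ℕ) : Prop :=
  memS d σ ∧ memW d I σ ∧
  ((Finset.Icc 1 (d' d - 1)).filter fun j => Jmem d σ j) = J ∧
  (∀ i, 1 ≤ i → i ≤ d' d → d' d < σ i)

/-! ### Arithmetic auxiliary lemmas -/

lemma two_d' {d : ℕ} (hd : 1 ≤ d) : 2 * d' d = d * (d - 1) := by
  have h : Even ((d-1) * (d-1+1)) := Nat.even_mul_succ_self (d-1)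
  have h2 : d - 1 + 1 = d := by omega
  rw [h2] at h
  have h3 : (d-1) * d = d * (d-1) := Nat.mul_comm _ _
  rw [h3] at h
  rcases h with ⟨k, hk⟩
  unfold d'
  omega

lemma d'_pos {d : ℕ} (hd : 2 ≤ d) : 1 ≤ d' d := by
  have h := two_d' (d := d) (by omega)
  have h2 : 2 * 1 ≤ d * (d - 1) := Nat.mul_le_mul (by omega) (by omega)
  omega

/-- Partial sums used to analyze `bmap`. -/
def Svar (d i : ℕ) : ℕ := ∑ t ∈ Finset.Ico 1 i, (d - 1 - t)

lemma Svar_one {d : ℕ} : Svar d 1 = 0 := by simp [Svar]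

lemma Svar_succ {d i : ℕ} (h : 1 ≤ i) : Svar d (i + 1) = Svar d i + (d - 1 - i) := by
  unfold Svar
  rw [Finset.sum_Ico_succ_top h]

lemma Svar_mono {d i i' : ℕ} (h : i ≤ i') : Svar d i ≤ Svar d i' := by
  apply Finset.sum_le_sum_of_subset
  exact Finset.Ico_subset_Ico le_rfl h

lemma Svar_two_mul {d i : ℕ} (hd : 2 ≤ d) (h1 : 1 ≤ i) (h2 : i ≤ d - 1) :
    2 * Svar d i = (i - 1) * (2 * d - 2 - i) := by
  revert h2
  induction i, h1 using Nat.le_induction with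
  | base => intro _; simp [Svar_one]
  | succ i hi ih =>
    intro h2
    have ih' := ih (by omega)
    rw [Svar_succ hi]
    have hb1 : (1:ℕ) ≤ i := hi
    have hb2 : i ≤ d - 2 := by omega
    zify [show i ≤ 2*d-2 by omega, show i+1 ≤ 2*d-2 by omega, show 1 ≤ i+1 by omega,
      show 1 ≤ i from hi, show i ≤ d-1 by omega, show 2 ≤ 2*d by omega,
      show 1 ≤ d by omega, show (1:ℕ) ≤ 2 by omega] at ih' ⊢
    linear_combination ih'

lemma bmap_eq {d i j : ℕ} (hd : 2 ≤ d) (h1 : 1 ≤ i) (hij : i < j) (hj : j ≤ d) :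
    bmap d i j = d' d + j - 1 + Svar d i := by
  have h := Svar_two_mul hd h1 (show i ≤ d - 1 by omega)
  unfold bmap
  omega

lemma Svar_last {d : ℕ} (hd : 2 ≤ d) : d' d + d - 1 + Svar d (d - 1) = 2 * d' d := by
  have h := Svar_two_mul hd (show 1 ≤ d - 1 by omega) le_rfl
  have h2 : 2 * d - 2 - (d - 1) = d - 1 := by omega
  rw [h2] at h
  have h3 := two_d' (d := d) (by omega)
  have h4 : d * (d - 1) = (d - 1 - 1) * (d - 1) + 2 * (d - 1) := by
    zify [show 1 ≤ d - 1 by omega, show 1 ≤ d by omega]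
    ring
  omega

lemma bmap_lt_bmap {d i j i' j' : ℕ} (hd : 2 ≤ d) (h1 : 1 ≤ i) (hij : i < j) (hj : j ≤ d)
    (h1' : 1 ≤ i') (hij' : i' < j') (hj' : j' ≤ d) (hii' : i < i') :
    bmap d i j < bmap d i' j' := by
  rw [bmap_eq hd h1 hij hj, bmap_eq hd h1' hij' hj']
  have hm : Svar d (i + 1) ≤ Svar d i' := Svar_mono hii'
  rw [Svar_succ h1] at hm
  omega

lemma bmap_inj {d i j i' j' : ℕ} (hd : 2 ≤ d) (h1 : 1 ≤ i) (hij : i < j) (hj : j ≤ d)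
    (h1' : 1 ≤ i') (hij' : i' < j') (hj' : j' ≤ d)
    (heq : bmap d i j = bmap d i' j') : i = i' ∧ j = j' := by
  rcases lt_trichotomy i i' with h | h | h
  · exact absurd heq (Nat.ne_of_lt (bmap_lt_bmap hd h1 hij hj h1' hij' hj' h))
  · subst h
    rw [bmap_eq hd h1 hij hj, bmap_eq hd h1' hij' hj'] at heq
    exact ⟨rfl, by omega⟩
  · exact absurd heq.symm (Nat.ne_of_lt (bmap_lt_bmap hd h1' hij' hj' h1 hij hj h))

lemma bmap_bounds {d i j : ℕ} (hd : 2 ≤ d) (h1 : 1 ≤ i) (hij : i < j) (hj : j ≤ d) :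
    d' d < bmap d i j ∧ bmap d i j ≤ 2 * d' d := by
  rw [bmap_eq hd h1 hij hj]
  have hm : Svar d i ≤ Svar d (d - 1) := Svar_mono (by omega)
  have hl := Svar_last hd
  omega

lemma bmap_top {d : ℕ} (hd : 2 ≤ d) : bmap d (d - 1) d = 2 * d' d := by
  rw [bmap_eq hd (by omega) (by omega) le_rfl]
  exact Svar_last hd

lemma bmap_surj {d l : ℕ} (hd : 2 ≤ d) (hl1 : d' d < l) (hl2 : l ≤ 2 * d' d) :
    ∃ i j, 1 ≤ i ∧ i < j ∧ j ≤ d ∧ bmap d i j = l := by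
  have main : ∀ n i, 1 ≤ i → i + n = d - 1 →
      ∀ l, d' d + i + Svar d i ≤ l → l ≤ 2 * d' d →
      ∃ i' j, 1 ≤ i' ∧ i' < j ∧ j ≤ d ∧ bmap d i' j = l := by
    intro n
    induction n with
    | zero =>
      intro i h1 h2 l hl1 hl2
      have hi : i = d - 1 := by omega
      subst hi
      have hlast := Svar_last hd
      refine ⟨d - 1, l + 1 - (d' d + Svar d (d - 1)), by omega, by omega, by omega, ?_⟩
      rw [bmap_eq hd (by omega) (by omega) (by omega)]
      omega
    | succ n ih =>
      intro i h1 h2 l hl1 hl2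
      by_cases hc : l ≤ d' d + d - 1 + Svar d i
      · refine ⟨i, l + 1 - (d' d + Svar d i), h1, by omega, by omega, ?_⟩
        rw [bmap_eq hd h1 (by omega) (by omega)]
        omega
      · apply ih (i + 1) (by omega) (by omega) l _ hl2
        rw [Svar_succ h1]
        omega
  have h := main (d - 2) 1 le_rfl (by omega) l (by rw [Svar_one]; omega) hl2
  exact h
/-! ### The value of the linear forms -/

/-- `val d r s l = v_l · (r,s)`. -/
def val (d : ℕ) (r s : ℕ → ℕ) (l : ℕ) : ℕ :=
  (∑ j ∈ Finset.Icc 1 d, v d l j * r j) +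
    ∑ j ∈ Finset.Icc 1 (d' d), v d l (d + j) * s j

lemma wform_eq (d : ℕ) (σ : ℕ → ℕ) (i : ℕ) (r s : ℕ → ℕ) :
    wform d σ i r s = (val d r s (σ i) : ℤ) - (val d r s (σ (i + 1)) : ℤ) := by
  unfold wform val
  push_cast
  rw [Finset.sum_congr rfl (fun j _ => sub_mul ((v d (σ i) j : ℤ)) _ _),
    Finset.sum_congr (M := ℤ) rfl (fun j _ => sub_mul ((v d (σ i) (d+j) : ℤ)) _ _),
    Finset.sum_sub_distrib, Finset.sum_sub_distrib]
  ring

/-- Tail sums of `s`. -/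
def Tv (d : ℕ) (s : ℕ → ℕ) (l : ℕ) : ℕ := ∑ j ∈ Finset.Icc l (d' d), s j

lemma val_small {d l : ℕ} (r s : ℕ → ℕ) (h1 : 1 ≤ l) (h2 : l ≤ d' d) :
    val d r s l = Tv d s l := by
  unfold val Tv
  have hr : ∑ j ∈ Finset.Icc 1 d, v d l j * r j = 0 := by
    apply Finset.sum_eq_zero
    intro j hj
    rw [Finset.mem_Icc] at hj
    unfold v
    rw [if_pos h2, if_neg (by omega)]
    ring
  rw [hr, zero_add]
  have hs : ∀ j ∈ Finset.Icc 1 (d' d), v d l (d + j) * s j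
      = if l ≤ j then s j else 0 := by
    intro j hj
    rw [Finset.mem_Icc] at hj
    unfold v
    rw [if_pos h2]
    by_cases hc : l ≤ j
    · rw [if_pos (by omega), if_pos hc, one_mul]
    · rw [if_neg (by omega), if_neg hc, zero_mul]
  rw [Finset.sum_congr rfl hs, ← Finset.sum_filter]
  congr 1
  ext m
  simp only [Finset.mem_filter, Finset.mem_Icc]
  omega

lemma Tv_antitone {d l m : ℕ} (s : ℕ → ℕ) (h : l ≤ m) : Tv d s m ≤ Tv d s l :=
  Finset.sum_le_sum_of_subset (Finset.Icc_subset_Icc_left h)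

lemma Tv_succ {d l : ℕ} (s : ℕ → ℕ) (h2 : l ≤ d' d) :
    Tv d s l = s l + Tv d s (l + 1) := by
  unfold Tv
  have h : Finset.Icc l (d' d) = insert l (Finset.Icc (l + 1) (d' d)) := by
    ext m; simp only [Finset.mem_Icc, Finset.mem_insert]; omega
  rw [h, Finset.sum_insert (by simp only [Finset.mem_Icc]; omega)]

lemma mem_pairs {d : ℕ} {p : ℕ × ℕ} :
    p ∈ pairs d ↔ (1 ≤ p.1 ∧ p.1 < p.2 ∧ p.2 ≤ d) := by
  unfold pairs
  simp only [Finset.mem_filter, Finset.mem_product, Finset.mem_Icc]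
  omega

lemma filter_bmap_singleton {d l : ℕ} (hd : 2 ≤ d) (hl1 : d' d < l) (hl2 : l ≤ 2 * d' d) :
    ∃ a b, 1 ≤ a ∧ a < b ∧ b ≤ d ∧ bmap d a b = l ∧
      (pairs d).filter (fun p => bmap d p.1 p.2 = l) = {(a, b)} := by
  obtain ⟨a, b, h1, h2, h3, h4⟩ := bmap_surj hd hl1 hl2
  refine ⟨a, b, h1, h2, h3, h4, ?_⟩
  ext p
  simp only [Finset.mem_filter, Finset.mem_singleton, mem_pairs]
  constructor
  · rintro ⟨⟨hp1, hp2, hp3⟩, hp4⟩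
    have := bmap_inj hd hp1 hp2 hp3 h1 h2 h3 (by rw [hp4, h4])
    cases p
    simp_all
  · rintro rfl
    exact ⟨⟨h1, h2, h3⟩, h4⟩

lemma indsum {d a : ℕ} (r : ℕ → ℕ) (h : 1 ≤ a) :
    ∑ m ∈ Finset.Icc 1 d, (if a ≤ m ∧ m ≤ d then 1 else 0) * r m
      = ∑ m ∈ Finset.Icc a d, r m := by
  have hs : ∀ m ∈ Finset.Icc 1 d, (if a ≤ m ∧ m ≤ d then 1 else 0) * r m
      = if a ≤ m ∧ m ≤ d then r m else 0 := by
    intro m hm; split_ifs <;> ring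
  rw [Finset.sum_congr rfl hs, ← Finset.sum_filter]
  congr 1
  ext m
  simp only [Finset.mem_filter, Finset.mem_Icc]
  omega

lemma val_big {d l : ℕ} (r s : ℕ → ℕ) (hd : 2 ≤ d) (hl1 : d' d < l) (hl2 : l ≤ 2 * d' d) :
    ∃ a b, 1 ≤ a ∧ a < b ∧ b ≤ d ∧ bmap d a b = l ∧
      val d r s l = (∑ m ∈ Finset.Icc a d, r m) + ∑ m ∈ Finset.Icc b d, r m := by
  obtain ⟨a, b, h1, h2, h3, h4, h5⟩ := filter_bmap_singleton hd hl1 hl2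
  refine ⟨a, b, h1, h2, h3, h4, ?_⟩
  unfold val
  have hv : ∀ m, v d l m = (if a ≤ m ∧ m ≤ d then 1 else 0) + (if b ≤ m ∧ m ≤ d then 1 else 0) := by
    intro m
    unfold v
    rw [if_neg (by omega), h5, Finset.sum_singleton]
  have hs : ∑ j ∈ Finset.Icc 1 (d' d), v d l (d + j) * s j = 0 := by
    apply Finset.sum_eq_zero
    intro j hj
    rw [Finset.mem_Icc] at hj
    rw [hv]
    rw [if_neg (by omega), if_neg (by omega)]
    ring
  rw [hs, add_zero]
  have hr : ∀ m ∈ Finset.Icc 1 d, v d l m * r m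
      = (if a ≤ m ∧ m ≤ d then 1 else 0) * r m + (if b ≤ m ∧ m ≤ d then 1 else 0) * r m := by
    intro m hm; rw [hv]; ring
  rw [Finset.sum_congr rfl hr, Finset.sum_add_distrib, indsum r h1, indsum r (by omega)]

lemma sum_Icc_pred {d : ℕ} (r : ℕ → ℕ) (hd : 2 ≤ d) :
    ∑ m ∈ Finset.Icc (d - 1) d, r m = r (d - 1) + r d := by
  have h : Finset.Icc (d - 1) d = insert (d - 1) (Finset.Icc d d) := by
    ext m; simp only [Finset.mem_Icc, Finset.mem_insert]; omega
  rw [h, Finset.sum_insert (by simp only [Finset.mem_Icc]; omega), Finset.Icc_self,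
    Finset.sum_singleton]

lemma val_big_ge {d l : ℕ} (r s : ℕ → ℕ) (hd : 2 ≤ d) (hl1 : d' d < l) (hl2 : l ≤ 2 * d' d) :
    r (d - 1) + 2 * r d ≤ val d r s l := by
  obtain ⟨a, b, h1, h2, h3, _, h5⟩ := val_big r s hd hl1 hl2
  have ha : ∑ m ∈ Finset.Icc (d - 1) d, r m ≤ ∑ m ∈ Finset.Icc a d, r m :=
    Finset.sum_le_sum_of_subset (Finset.Icc_subset_Icc_left (by omega))
  have hb : ∑ m ∈ Finset.Icc d d, r m ≤ ∑ m ∈ Finset.Icc b d, r m :=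
    Finset.sum_le_sum_of_subset (Finset.Icc_subset_Icc_left (by omega))
  rw [sum_Icc_pred r hd] at ha
  rw [Finset.Icc_self, Finset.sum_singleton] at hb
  omega

lemma val_top {d : ℕ} (r s : ℕ → ℕ) (hd : 2 ≤ d) :
    val d r s (2 * d' d) = r (d - 1) + 2 * r d := by
  have hpos := d'_pos hd
  obtain ⟨a, b, h1, h2, h3, h4, h5⟩ := val_big r s hd (by omega) le_rfl
  obtain ⟨ha, hb⟩ := bmap_inj hd h1 h2 h3 (show 1 ≤ d - 1 by omega) (by omega) le_rfl
    (by rw [h4, bmap_top hd])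
  subst ha; subst hb
  rw [h5, sum_Icc_pred r hd, Finset.Icc_self, Finset.sum_singleton]
  ring
/-! ### The sorting key -/

/-- An upper bound on all values. -/
def keyB (d : ℕ) (r s : ℕ → ℕ) : ℕ := ∑ l ∈ Finset.Icc 1 (2 * d' d), val d r s l

lemma val_le_keyB {d l : ℕ} (r s : ℕ → ℕ) (h1 : 1 ≤ l) (h2 : l ≤ 2 * d' d) :
    val d r s l ≤ keyB d r s :=
  Finset.single_le_sum (fun _ _ => Nat.zero_le _) (Finset.mem_Icc.mpr ⟨h1, h2⟩)

/-- `key` sorts labels by value (descending), ties broken by label (descending). -/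
def key (d : ℕ) (r s : ℕ → ℕ) (l : ℕ) : ℕ :=
  (keyB d r s - val d r s l) * (2 * d' d + 1) + (2 * d' d - l)

lemma key_lt_of_val_lt {d a b : ℕ} (r s : ℕ → ℕ)
    (ha1 : 1 ≤ a) (ha2 : a ≤ 2 * d' d) (hb1 : 1 ≤ b) (hb2 : b ≤ 2 * d' d)
    (h : val d r s b < val d r s a) : key d r s a < key d r s b := by
  have hA := val_le_keyB (l := a) r s ha1 ha2
  unfold key
  have h1 : (keyB d r s - val d r s a) * (2 * d' d + 1) + (2 * d' d - a)
      < (keyB d r s - val d r s a + 1) * (2 * d' d + 1) := by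
    rw [add_mul, one_mul]; omega
  have h2 : (keyB d r s - val d r s a + 1) * (2 * d' d + 1)
      ≤ (keyB d r s - val d r s b) * (2 * d' d + 1) :=
    Nat.mul_le_mul_right _ (by omega)
  omega

lemma key_lt_of_val_eq {d a b : ℕ} (r s : ℕ → ℕ) (ha2 : a ≤ 2 * d' d)
    (h : val d r s a = val d r s b) (hab : b < a) : key d r s a < key d r s b := by
  unfold key
  rw [h]
  omega

lemma key_lt_iff {d a b : ℕ} (r s : ℕ → ℕ)
    (ha1 : 1 ≤ a) (ha2 : a ≤ 2 * d' d) (hb1 : 1 ≤ b) (hb2 : b ≤ 2 * d' d) :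
    key d r s a < key d r s b ↔
      (val d r s b < val d r s a ∨ (val d r s a = val d r s b ∧ b < a)) := by
  constructor
  · intro h
    rcases lt_trichotomy (val d r s a) (val d r s b) with hv | hv | hv
    · exact absurd h (not_lt.mpr (le_of_lt (key_lt_of_val_lt r s hb1 hb2 ha1 ha2 hv)))
    · rcases lt_trichotomy a b with hab | hab | hab
      · exact absurd h (not_lt.mpr (le_of_lt (key_lt_of_val_eq r s hb2 hv.symm hab)))
      · subst hab; exact absurd h (lt_irrefl _)
      · exact Or.inr ⟨hv, hab⟩
    · exact Or.inl hv
  · rintro (hv | ⟨hv, hab⟩)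
    · exact key_lt_of_val_lt r s ha1 ha2 hb1 hb2 hv
    · exact key_lt_of_val_eq r s ha2 hv hab

lemma key_injOn {d : ℕ} (r s : ℕ → ℕ) {a b : ℕ}
    (ha1 : 1 ≤ a) (ha2 : a ≤ 2 * d' d) (hb1 : 1 ≤ b) (hb2 : b ≤ 2 * d' d)
    (h : key d r s a = key d r s b) : a = b := by
  by_contra hne
  rcases lt_trichotomy (val d r s a) (val d r s b) with hv | hv | hv
  · exact absurd h (ne_of_gt (key_lt_of_val_lt r s hb1 hb2 ha1 ha2 hv))
  · rcases lt_trichotomy a b with hab | hab | hab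
    · exact absurd h (ne_of_gt (key_lt_of_val_eq r s hb2 hv.symm hab))
    · exact hne hab
    · exact absurd h (ne_of_lt (key_lt_of_val_eq r s ha2 hv hab))
  · exact absurd h (ne_of_lt (key_lt_of_val_lt r s ha1 ha2 hb1 hb2 hv))

/-! ### Existence of a sorting permutation -/

lemma exists_sorted_perm (n : ℕ) (f : ℕ → ℕ)
    (hf : ∀ a b, 1 ≤ a → a ≤ n → 1 ≤ b → b ≤ n → f a = f b → a = b) :
    ∃ σ : ℕ → ℕ, Set.BijOn σ (Set.Icc 1 n) (Set.Icc 1 n) ∧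
      (∀ i, 1 ≤ i → i < n → f (σ i) < f (σ (i + 1))) := by
  classical
  set K : Finset ℕ := (Finset.Icc 1 n).image f with hK
  have hinj : Set.InjOn f (Finset.Icc 1 n : Finset ℕ) := by
    intro a ha b hb hab
    simp only [Finset.coe_Icc, Set.mem_Icc] at ha hb
    exact hf a b ha.1 ha.2 hb.1 hb.2 hab
  have hKcard : K.card = n := by
    rw [hK, Finset.card_image_of_injOn hinj, Nat.card_Icc]
    omega
  set emb := K.orderEmbOfFin hKcard with hemb
  set g := Function.invFunOn f (Set.Icc 1 n) with hg
  have hmem : ∀ k : Fin n, ∃ a ∈ Set.Icc 1 n, f a = emb k := by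
    intro k
    obtain ⟨a, ha, hfa⟩ := Finset.mem_image.mp (K.orderEmbOfFin_mem hKcard k)
    rw [Finset.mem_Icc] at ha
    exact ⟨a, Set.mem_Icc.mpr ha, hfa⟩
  have hg1 : ∀ k : Fin n, g (emb k) ∈ Set.Icc 1 n := fun k =>
    Function.invFunOn_mem (hmem k)
  have hg2 : ∀ k : Fin n, f (g (emb k)) = emb k := fun k =>
    Function.invFunOn_eq (hmem k)
  refine ⟨fun i => if h : 1 ≤ i ∧ i ≤ n then g (emb ⟨i - 1, by omega⟩) else i, ?_, ?_⟩
  · refine ⟨?_, ?_, ?_⟩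
    · intro i hi
      rw [Set.mem_Icc] at hi
      simp only [dif_pos hi]
      exact hg1 _
    · intro i hi j hj hij
      rw [Set.mem_Icc] at hi hj
      simp only [dif_pos hi, dif_pos hj] at hij
      have : f (g (emb ⟨i - 1, by omega⟩)) = f (g (emb ⟨j - 1, by omega⟩)) := by rw [hij]
      rw [hg2, hg2] at this
      have := emb.injective this
      have := Fin.mk.inj_iff.mp this
      omega
    · intro l hl
      rw [Set.mem_Icc] at hl
      have hfl : f l ∈ K := by
        rw [hK, Finset.mem_image]
        exact ⟨l, Finset.mem_Icc.mpr hl, rfl⟩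
      have hrange : f l ∈ Set.range (K.orderEmbOfFin hKcard) := by
        rw [Finset.range_orderEmbOfFin]; exact hfl
      obtain ⟨k, hk⟩ := hrange
      refine ⟨(k : ℕ) + 1, Set.mem_Icc.mpr ⟨by omega, by omega⟩, ?_⟩
      have hcond : 1 ≤ (k : ℕ) + 1 ∧ (k : ℕ) + 1 ≤ n := ⟨by omega, by omega⟩
      simp only [dif_pos hcond]
      have hkk : (⟨(k : ℕ) + 1 - 1, by omega⟩ : Fin n) = k := by
        apply Fin.ext; simp
      rw [hkk, hk]
      have h1 := hg1 k
      have h2 := hg2 k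
      rw [hk] at h1 h2
      rw [Set.mem_Icc] at h1
      exact hf _ _ h1.1 h1.2 hl.1 hl.2 h2
  · intro i h1 h2
    have hc1 : 1 ≤ i ∧ i ≤ n := ⟨h1, by omega⟩
    have hc2 : 1 ≤ i + 1 ∧ i + 1 ≤ n := ⟨by omega, by omega⟩
    simp only [dif_pos hc1, dif_pos hc2]
    rw [hg2, hg2]
    apply emb.strictMono
    apply Fin.mk_lt_mk.mpr
    omega
/-! ### Chain lemmas for a permutation satisfying the sign conditions -/

section Chain

variable {d : ℕ} {σ r s : ℕ → ℕ}

lemma val_step (hbij : IsPermOn d σ)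
    (hasc : ∀ i, 1 ≤ i → i ≤ 2 * d' d - 1 → σ i < σ (i + 1) → 0 < wform d σ i r s)
    (hdesc : ∀ i, 1 ≤ i → i ≤ 2 * d' d - 1 → σ (i + 1) < σ i → 0 ≤ wform d σ i r s)
    {i : ℕ} (h1 : 1 ≤ i) (h2 : i < 2 * d' d) :
    val d r s (σ (i + 1)) ≤ val d r s (σ i) := by
  have hne : σ i ≠ σ (i + 1) := by
    intro h
    have := hbij.injOn (Set.mem_Icc.mpr ⟨h1, by omega⟩)
      (Set.mem_Icc.mpr (⟨by omega, by omega⟩ : 1 ≤ i + 1 ∧ i + 1 ≤ 2 * d' d)) h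
    omega
  rcases lt_or_gt_of_ne hne with h | h
  · have := hasc i h1 (by omega) h
    rw [wform_eq] at this
    omega
  · have := hdesc i h1 (by omega) h
    rw [wform_eq] at this
    omega

lemma val_chain (hbij : IsPermOn d σ)
    (hasc : ∀ i, 1 ≤ i → i ≤ 2 * d' d - 1 → σ i < σ (i + 1) → 0 < wform d σ i r s)
    (hdesc : ∀ i, 1 ≤ i → i ≤ 2 * d' d - 1 → σ (i + 1) < σ i → 0 ≤ wform d σ i r s)
    {a b : ℕ} (ha : 1 ≤ a) (hab : a ≤ b) (hb : b ≤ 2 * d' d) :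
    val d r s (σ b) ≤ val d r s (σ a) := by
  induction b, hab using Nat.le_induction with
  | base => exact le_refl _
  | succ b hb' ih =>
    have h1 := ih (by omega)
    have h2 := val_step hbij hasc hdesc (show 1 ≤ b by omega) (show b < 2 * d' d by omega)
    omega

lemma desc_of_val_eq (hbij : IsPermOn d σ)
    (hasc : ∀ i, 1 ≤ i → i ≤ 2 * d' d - 1 → σ i < σ (i + 1) → 0 < wform d σ i r s)
    (hdesc : ∀ i, 1 ≤ i → i ≤ 2 * d' d - 1 → σ (i + 1) < σ i → 0 ≤ wform d σ i r s)
    {a b : ℕ} (ha : 1 ≤ a) (hab : a < b) (hb : b ≤ 2 * d' d)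
    (hval : val d r s (σ a) = val d r s (σ b)) :
    ∀ k, a ≤ k → k < b → σ (k + 1) < σ k := by
  intro k hk1 hk2
  have e1 : val d r s (σ k) ≤ val d r s (σ a) := val_chain hbij hasc hdesc ha hk1 (by omega)
  have e2 : val d r s (σ b) ≤ val d r s (σ (k + 1)) :=
    val_chain hbij hasc hdesc (by omega) (by omega) hb
  have e3 : val d r s (σ (k + 1)) ≤ val d r s (σ k) :=
    val_step hbij hasc hdesc (by omega) (by omega)
  have heq : val d r s (σ k) = val d r s (σ (k + 1)) := by omega
  have hne : σ k ≠ σ (k + 1) := by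
    intro h
    have := hbij.injOn (Set.mem_Icc.mpr (⟨by omega, by omega⟩ : 1 ≤ k ∧ k ≤ 2 * d' d))
      (Set.mem_Icc.mpr (⟨by omega, by omega⟩ : 1 ≤ k + 1 ∧ k + 1 ≤ 2 * d' d)) h
    omega
  rcases lt_or_gt_of_ne hne with h | h
  · have := hasc k (by omega) (by omega) h
    rw [wform_eq] at this
    omega
  · exact h

lemma desc_trans {τ : ℕ → ℕ} {a b : ℕ} (hab : a < b)
    (hst : ∀ k, a ≤ k → k < b → τ (k + 1) < τ k) : τ b < τ a := by
  have h : a + 1 ≤ b := hab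
  induction b, h using Nat.le_induction with
  | base => exact hst a le_rfl (by omega)
  | succ b hb' ih =>
    have h1 := ih (by omega) (fun k hk1 hk2 => hst k hk1 (by omega))
    have h2 := hst b (by omega) (by omega)
    omega

lemma sigma_lt_of_val_eq (hbij : IsPermOn d σ)
    (hasc : ∀ i, 1 ≤ i → i ≤ 2 * d' d - 1 → σ i < σ (i + 1) → 0 < wform d σ i r s)
    (hdesc : ∀ i, 1 ≤ i → i ≤ 2 * d' d - 1 → σ (i + 1) < σ i → 0 ≤ wform d σ i r s)
    {a b : ℕ} (ha : 1 ≤ a) (hab : a < b) (hb : b ≤ 2 * d' d)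
    (hval : val d r s (σ a) = val d r s (σ b)) : σ b < σ a :=
  desc_trans hab (desc_of_val_eq hbij hasc hdesc ha hab hb hval)

/-- If the first `d'` positions carry big labels, the last `d'` carry small ones. -/
lemma sigma_small_of_late (hbij : IsPermOn d σ)
    (hbig : ∀ i, 1 ≤ i → i ≤ d' d → d' d < σ i)
    {i : ℕ} (h1 : d' d < i) (h2 : i ≤ 2 * d' d) : σ i ≤ d' d := by
  by_contra hc
  push_neg at hc
  have hmaps : ∀ a ∈ insert i (Finset.Icc 1 (d' d)), σ a ∈ Finset.Icc (d' d + 1) (2 * d' d) := by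
    intro a ha
    rw [Finset.mem_insert, Finset.mem_Icc] at ha
    have hmem : a ∈ Set.Icc 1 (2 * d' d) := by
      rw [Set.mem_Icc]
      rcases ha with rfl | ha <;> omega
    have hub := hbij.mapsTo hmem
    rw [Set.mem_Icc] at hub
    rw [Finset.mem_Icc]
    rcases ha with rfl | ha
    · omega
    · have := hbig a ha.1 ha.2
      omega
  have hinj : Set.InjOn σ ↑(insert i (Finset.Icc 1 (d' d))) := by
    intro a ha b hb hab
    simp only [Finset.coe_insert, Set.mem_insert_iff, Finset.coe_Icc, Set.mem_Icc] at ha hb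
    apply hbij.injOn _ _ hab <;> rw [Set.mem_Icc] <;> omega
  have hcard := Finset.card_le_card_of_injOn σ hmaps hinj
  rw [Finset.card_insert_of_notMem (by rw [Finset.mem_Icc]; omega)] at hcard
  rw [Nat.card_Icc, Nat.card_Icc] at hcard
  omega

lemma pos_spec (hbij : IsPermOn d σ) {l : ℕ} (h1 : 1 ≤ l) (h2 : l ≤ 2 * d' d) :
    σ (Function.invFunOn σ (Set.Icc 1 (2 * d' d)) l) = l ∧
      1 ≤ Function.invFunOn σ (Set.Icc 1 (2 * d' d)) l ∧
      Function.invFunOn σ (Set.Icc 1 (2 * d' d)) l ≤ 2 * d' d := by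
  have hex : ∃ a ∈ Set.Icc 1 (2 * d' d), σ a = l := by
    have := hbij.surjOn (Set.mem_Icc.mpr ⟨h1, h2⟩)
    obtain ⟨a, ha, hfa⟩ := this
    exact ⟨a, ha, hfa⟩
  have hm := Function.invFunOn_mem hex
  rw [Set.mem_Icc] at hm
  exact ⟨Function.invFunOn_eq hex, hm.1, hm.2⟩

end Chain
/-! ### Generic sorted chain -/

lemma sorted_chain {f τ : ℕ → ℕ} {n : ℕ}
    (hs : ∀ i, 1 ≤ i → i < n → f (τ i) < f (τ (i + 1)))
    {a b : ℕ} (ha : 1 ≤ a) (hab : a < b) (hb : b ≤ n) : f (τ a) < f (τ b) := by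
  have h : a + 1 ≤ b := hab
  induction b, h using Nat.le_induction with
  | base => exact hs a ha (by omega)
  | succ b hb' ih =>
    have h1 := ih (by omega) (by omega)
    have h2 := hs b (by omega) (by omega)
    omega

/-! ### `G ⊆ H` -/

lemma G_subset_H {d : ℕ} (hd : 2 ≤ d) {I J : Finset ℕ} {σ r s : ℕ → ℕ}
    (hSIJ : memSIJ d I J σ) (hG : memG d I σ r s) : memH d I J r s := by
  obtain ⟨hS, hW, hJσ, hbig⟩ := hSIJ
  obtain ⟨hbij, hdyck, hpat⟩ := hS
  obtain ⟨hG1, hG2, hasc, hdesc, hG5, hG6⟩ := hG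
  have hd' : 1 ≤ d' d := d'_pos hd
  refine ⟨hG1, hG2, ?_, ?_, ?_, hG5, hG6⟩
  · -- s positive on J
    intro j hj
    rw [← hJσ, Finset.mem_filter, Finset.mem_Icc] at hj
    obtain ⟨⟨hj1, hj2⟩, hjm⟩ := hj
    obtain ⟨hp1, hp2, hp3⟩ := pos_spec (σ := σ) hbij (show 1 ≤ j by omega)
      (show j ≤ 2 * d' d by omega)
    obtain ⟨hq1, hq2, hq3⟩ := pos_spec (σ := σ) hbij (show 1 ≤ j + 1 by omega)
      (show j + 1 ≤ 2 * d' d by omega)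
    by_contra hs0
    push_neg at hs0
    have hs0' : s j = 0 := by omega
    have hT : Tv d s j = Tv d s (j + 1) := by
      rw [Tv_succ s (show j ≤ d' d by omega), hs0', zero_add]
    have hveq : val d r s (σ (Function.invFunOn σ (Set.Icc 1 (2 * d' d)) j))
        = val d r s (σ (Function.invFunOn σ (Set.Icc 1 (2 * d' d)) (j + 1))) := by
      rw [hp1, hq1, val_small r s (by omega) (by omega),
        val_small r s (by omega) (by omega), hT]
    have hlt := sigma_lt_of_val_eq hbij hasc hdesc hp2 hjm hq3 hveq
    rw [hp1, hq1] at hlt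
    omega
  · -- s vanishes off J
    intro j hj1 hj2 hjn
    have hjm : ¬ Jmem d σ j := by
      intro hc
      exact hjn (by rw [← hJσ, Finset.mem_filter, Finset.mem_Icc]; exact ⟨⟨hj1, hj2⟩, hc⟩)
    unfold Jmem at hjm
    push_neg at hjm
    obtain ⟨hp1, hp2, hp3⟩ := pos_spec (σ := σ) hbij (show 1 ≤ j by omega)
      (show j ≤ 2 * d' d by omega)
    obtain ⟨hq1, hq2, hq3⟩ := pos_spec (σ := σ) hbij (show 1 ≤ j + 1 by omega)
      (show j + 1 ≤ 2 * d' d by omega)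
    have hne : Function.invFunOn σ (Set.Icc 1 (2 * d' d)) (j + 1)
        ≠ Function.invFunOn σ (Set.Icc 1 (2 * d' d)) j := by
      intro h
      have hcontra : j + 1 = j := by rw [← hq1, h, hp1]
      omega
    have hlt : Function.invFunOn σ (Set.Icc 1 (2 * d' d)) (j + 1)
        < Function.invFunOn σ (Set.Icc 1 (2 * d' d)) j := by omega
    have hch := val_chain hbij hasc hdesc hq2 (le_of_lt hlt) hp3
    rw [hp1, hq1, val_small r s (by omega) (by omega),
      val_small r s (by omega) (by omega)] at hch
    have hT := Tv_succ s (show j ≤ d' d by omega)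
    omega
  · -- the sum inequality
    obtain ⟨hp1, hp2, hp3⟩ := pos_spec (σ := σ) hbij (show 1 ≤ 2 * d' d by omega) le_rfl
    obtain ⟨hq1, hq2, hq3⟩ := pos_spec (σ := σ) hbij le_rfl (show 1 ≤ 2 * d' d by omega)
    set p := Function.invFunOn σ (Set.Icc 1 (2 * d' d)) (2 * d' d) with hp
    set q := Function.invFunOn σ (Set.Icc 1 (2 * d' d)) 1 with hq
    have hpd : p ≤ d' d := by
      by_contra hc
      push_neg at hc
      have := sigma_small_of_late hbij hbig hc hp3
      omega
    have hqd : d' d < q := by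
      by_contra hc
      push_neg at hc
      have := hbig q hq2 hc
      omega
    have hch := val_chain hbij hasc hdesc hp2 (show p ≤ q by omega) hq3
    rw [hp1, hq1, val_small r s le_rfl hd', val_top r s hd] at hch
    exact hch

/-! ### Uniqueness -/

lemma key_sorted_of_memG {d : ℕ} {I : Finset ℕ} {σ r s : ℕ → ℕ}
    (hS : memS d σ) (hG : memG d I σ r s) :
    ∀ i, 1 ≤ i → i < 2 * d' d → key d r s (σ i) < key d r s (σ (i + 1)) := by
  obtain ⟨hbij, _, _⟩ := hS
  obtain ⟨_, _, hasc, hdesc, _, _⟩ := hG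
  intro i h1 h2
  have hmi := hbij.mapsTo (Set.mem_Icc.mpr (⟨h1, by omega⟩ : 1 ≤ i ∧ i ≤ 2 * d' d))
  have hmi1 := hbij.mapsTo
    (Set.mem_Icc.mpr (⟨by omega, by omega⟩ : 1 ≤ i + 1 ∧ i + 1 ≤ 2 * d' d))
  rw [Set.mem_Icc] at hmi hmi1
  have hne : σ i ≠ σ (i + 1) := by
    intro h
    have := hbij.injOn (Set.mem_Icc.mpr (⟨h1, by omega⟩ : 1 ≤ i ∧ i ≤ 2 * d' d))
      (Set.mem_Icc.mpr (⟨by omega, by omega⟩ : 1 ≤ i + 1 ∧ i + 1 ≤ 2 * d' d)) h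
    omega
  rcases lt_or_gt_of_ne hne with h | h
  · have hw := hasc i h1 (by omega) h
    rw [wform_eq] at hw
    exact key_lt_of_val_lt r s hmi.1 hmi.2 hmi1.1 hmi1.2 (by omega)
  · have hw := hdesc i h1 (by omega) h
    rw [wform_eq] at hw
    rcases Nat.lt_or_ge (val d r s (σ (i + 1))) (val d r s (σ i)) with hv | hv
    · exact key_lt_of_val_lt r s hmi.1 hmi.2 hmi1.1 hmi1.2 hv
    · exact key_lt_of_val_eq r s hmi.2 (by omega) h

lemma G_unique {d : ℕ} (hd : 2 ≤ d) {I : Finset ℕ} {σ₁ σ₂ r s : ℕ → ℕ}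
    (hS1 : memS d σ₁) (hS2 : memS d σ₂)
    (hG1 : memG d I σ₁ r s) (hG2 : memG d I σ₂ r s) :
    Set.EqOn σ₁ σ₂ (Set.Icc 1 (2 * d' d)) := by
  have hsort1 := key_sorted_of_memG hS1 hG1
  have hsort2 := key_sorted_of_memG hS2 hG2
  set K : Finset ℕ := (Finset.Icc 1 (2 * d' d)).image (key d r s) with hK
  have hKcard : K.card = 2 * d' d := by
    rw [hK, Finset.card_image_of_injOn, Nat.card_Icc]
    · omega
    · intro a ha b hb hab
      simp only [Finset.coe_Icc, Set.mem_Icc] at ha hb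
      exact key_injOn r s ha.1 ha.2 hb.1 hb.2 hab
  have main : ∀ τ : ℕ → ℕ, memS d τ →
      (∀ i, 1 ≤ i → i < 2 * d' d → key d r s (τ i) < key d r s (τ (i + 1))) →
      (fun k : Fin (2 * d' d) => key d r s (τ ((k : ℕ) + 1))) = K.orderEmbOfFin hKcard := by
    intro τ hS hsort
    apply Finset.orderEmbOfFin_unique
    · intro k
      have hm := hS.1.mapsTo (Set.mem_Icc.mpr
        (⟨by omega, by omega⟩ : 1 ≤ (k : ℕ) + 1 ∧ (k : ℕ) + 1 ≤ 2 * d' d))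
      rw [Set.mem_Icc] at hm
      rw [hK, Finset.mem_image]
      exact ⟨τ ((k : ℕ) + 1), Finset.mem_Icc.mpr hm, rfl⟩
    · intro k k' hkk'
      exact sorted_chain hsort (by omega) (by exact_mod_cast Nat.add_lt_add_right hkk' 1)
        (by omega)
  have h1 := main σ₁ hS1 hsort1
  have h2 := main σ₂ hS2 hsort2
  intro x hx
  rw [Set.mem_Icc] at hx
  have hfun : (fun k : Fin (2 * d' d) => key d r s (σ₁ ((k : ℕ) + 1)))
      = (fun k : Fin (2 * d' d) => key d r s (σ₂ ((k : ℕ) + 1))) := by rw [h1, h2]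
  have hx' : x - 1 < 2 * d' d := by omega
  have := congrFun hfun ⟨x - 1, hx'⟩
  simp only at this
  have hxx : x - 1 + 1 = x := by omega
  rw [hxx] at this
  have hm1 := hS1.1.mapsTo (Set.mem_Icc.mpr hx)
  have hm2 := hS2.1.mapsTo (Set.mem_Icc.mpr hx)
  rw [Set.mem_Icc] at hm1 hm2
  exact key_injOn r s hm1.1 hm1.2 hm2.1 hm2.2 this
/-! ### `H ⊆ ⋃ G` -/

lemma H_subset_G {d : ℕ} (hd : 2 ≤ d) {I J : Finset ℕ}
    (hI : I ⊆ Finset.Icc 1 (d - 1)) (hJ : J ⊆ Finset.Icc 1 (d' d - 1)) {r s : ℕ → ℕ}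
    (hH : memH d I J r s) : ∃ σ, memSIJ d I J σ ∧ memG d I σ r s := by
  obtain ⟨hH1, hH2, hH3, hH4, hH5, hH6, hH7⟩ := hH
  have hd' : 1 ≤ d' d := d'_pos hd
  obtain ⟨σ, hbij, hsort⟩ := exists_sorted_perm (2 * d' d) (key d r s)
    (fun a b ha1 ha2 hb1 hb2 h => key_injOn r s ha1 ha2 hb1 hb2 h)
  have hmem : ∀ i, 1 ≤ i → i ≤ 2 * d' d → 1 ≤ σ i ∧ σ i ≤ 2 * d' d := by
    intro i h1 h2
    have := hbij.mapsTo (Set.mem_Icc.mpr ⟨h1, h2⟩)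
    rwa [Set.mem_Icc] at this
  -- big labels have smaller key than small labels
  have hbs : ∀ a b, 1 ≤ a → a ≤ d' d → d' d < b → b ≤ 2 * d' d →
      key d r s b < key d r s a := by
    intro a b ha1 ha2 hb1 hb2
    have hv1 : r (d - 1) + 2 * r d ≤ val d r s b := val_big_ge r s hd hb1 hb2
    have hv2 : val d r s a = Tv d s a := val_small r s ha1 ha2
    have hv3 : Tv d s a ≤ Tv d s 1 := Tv_antitone s ha1
    have hv4 : Tv d s 1 ≤ r (d - 1) + 2 * r d := hH5
    rcases Nat.lt_or_ge (val d r s a) (val d r s b) with hv | hv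
    · exact key_lt_of_val_lt r s (by omega) hb2 ha1 (by omega) hv
    · exact key_lt_of_val_eq r s hb2 (by omega) (by omega)
  -- the first d' positions carry big labels
  have hbig : ∀ i, 1 ≤ i → i ≤ d' d → d' d < σ i := by
    intro i h1 h2
    by_contra hc
    push_neg at hc
    have hall : ∀ j, i ≤ j → j ≤ 2 * d' d → σ j ≤ d' d := by
      intro j hj1 hj2
      rcases Nat.eq_or_lt_of_le hj1 with rfl | hj
      · exact hc
      · by_contra hcj
        push_neg at hcj
        have hk1 : key d r s (σ i) < key d r s (σ j) := sorted_chain hsort h1 hj hj2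
        have hk2 : key d r s (σ j) < key d r s (σ i) :=
          hbs (σ i) (σ j) (hmem i h1 (by omega)).1 hc hcj (hmem j (by omega) hj2).2
        omega
    have hmaps : ∀ a ∈ Finset.Icc i (2 * d' d), σ a ∈ Finset.Icc 1 (d' d) := by
      intro a ha
      rw [Finset.mem_Icc] at ha
      rw [Finset.mem_Icc]
      exact ⟨(hmem a (by omega) ha.2).1, hall a ha.1 ha.2⟩
    have hinj : Set.InjOn σ ↑(Finset.Icc i (2 * d' d)) := by
      intro a ha b hb hab
      simp only [Finset.coe_Icc, Set.mem_Icc] at ha hb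
      apply hbij.injOn _ _ hab <;> rw [Set.mem_Icc] <;> omega
    have hcard := Finset.card_le_card_of_injOn σ hmaps hinj
    rw [Nat.card_Icc, Nat.card_Icc] at hcard
    omega
  have hsmall : ∀ {i : ℕ}, d' d < i → i ≤ 2 * d' d → σ i ≤ d' d :=
    fun h1 h2 => sigma_small_of_late hbij hbig h1 h2
  -- the wform sign conditions
  have hasc : ∀ i, 1 ≤ i → i ≤ 2 * d' d - 1 → σ i < σ (i + 1) → 0 < wform d σ i r s := by
    intro i h1 h2 h3
    have hk := hsort i h1 (by omega)
    have hmi := hmem i h1 (by omega)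
    have hmi1 := hmem (i + 1) (by omega) (by omega)
    rw [key_lt_iff r s hmi.1 hmi.2 hmi1.1 hmi1.2] at hk
    rw [wform_eq]
    rcases hk with hk | ⟨_, hk⟩
    · omega
    · omega
  have hdesc : ∀ i, 1 ≤ i → i ≤ 2 * d' d - 1 → σ (i + 1) < σ i → 0 ≤ wform d σ i r s := by
    intro i h1 h2 _
    have hk := hsort i h1 (by omega)
    have hmi := hmem i h1 (by omega)
    have hmi1 := hmem (i + 1) (by omega) (by omega)
    rw [key_lt_iff r s hmi.1 hmi.2 hmi1.1 hmi1.2] at hk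
    rw [wform_eq]
    rcases hk with hk | ⟨hk, _⟩
    · omega
    · omega
  have hG : memG d I σ r s := ⟨hH1, hH2, hasc, hdesc, hH6, hH7⟩
  -- value chain along positions
  have hvmono : ∀ a b, 1 ≤ a → a ≤ b → b ≤ 2 * d' d →
      val d r s (σ b) ≤ val d r s (σ a) := by
    intro a b h1 h2 h3
    rcases Nat.eq_or_lt_of_le h2 with rfl | h2'
    · exact le_refl _
    · have hk := sorted_chain hsort h1 h2' h3
      have hma := hmem a h1 (by omega)
      have hmb := hmem b (by omega) h3
      rw [key_lt_iff r s hma.1 hma.2 hmb.1 hmb.2] at hk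
      rcases hk with hk | ⟨hk, _⟩
      · omega
      · omega
  -- memS
  have hdyck : ∀ i ∈ Finset.Icc 1 (2 * d' d),
      ((Finset.Icc 1 i).filter fun l => σ l ≤ d' d).card ≤
        ((Finset.Icc 1 i).filter fun l => d' d < σ l).card := by
    intro i hi
    rw [Finset.mem_Icc] at hi
    have hf1 : (Finset.Icc 1 i).filter (fun l => σ l ≤ d' d) = Finset.Icc (d' d + 1) i := by
      ext l
      simp only [Finset.mem_filter, Finset.mem_Icc]
      constructor
      · rintro ⟨⟨hl1, hl2⟩, hl3⟩
        refine ⟨?_, hl2⟩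
        by_contra hcl
        push_neg at hcl
        have := hbig l hl1 (by omega)
        omega
      · rintro ⟨hl1, hl2⟩
        exact ⟨⟨by omega, hl2⟩, hsmall (by omega) (by omega)⟩
    have hf2 : (Finset.Icc 1 i).filter (fun l => d' d < σ l)
        = Finset.Icc 1 (min i (d' d)) := by
      ext l
      simp only [Finset.mem_filter, Finset.mem_Icc, le_min_iff]
      constructor
      · intro h
        refine ⟨h.1.1, h.1.2, ?_⟩
        by_contra hcl
        push_neg at hcl
        have hsl := hsmall (i := l) hcl (by omega)
        have := h.2
        omega
      · intro h
        exact ⟨⟨h.1, h.2.1⟩, hbig l h.1 h.2.2⟩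
    rw [hf1, hf2, Nat.card_Icc, Nat.card_Icc]
    omega
  have hpat : ∀ i j, 1 ≤ i → i < j → j ≤ 2 * d' d → σ i ≤ d' d → σ j ≤ d' d →
      σ j < σ i → ∀ k, i ≤ k → k < j → σ (k + 1) < σ k := by
    intro i j h1 hij hj hsi hsj hji k hk1 hk2
    have hmi := hmem i h1 (by omega)
    have hmj := hmem j (by omega) hj
    -- the values at i and j are equal
    have hva : val d r s (σ i) = Tv d s (σ i) := val_small r s hmi.1 hsi
    have hvb : val d r s (σ j) = Tv d s (σ j) := val_small r s hmj.1 hsj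
    have hT : Tv d s (σ i) ≤ Tv d s (σ j) := Tv_antitone s (le_of_lt hji)
    have hch : val d r s (σ j) ≤ val d r s (σ i) := hvmono i j h1 (le_of_lt hij) hj
    have heq1 : val d r s (σ k) = val d r s (σ (k + 1)) := by
      have e1 := hvmono i k h1 hk1 (by omega)
      have e2 := hvmono k (k + 1) (by omega) (by omega) (by omega)
      have e3 := hvmono (k + 1) j (by omega) (by omega) hj
      omega
    have hk := hsort k (by omega) (by omega)
    have hmk := hmem k (by omega) (by omega)
    have hmk1 := hmem (k + 1) (by omega) (by omega)
    rw [key_lt_iff r s hmk.1 hmk.2 hmk1.1 hmk1.2] at hk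
    rcases hk with hk | ⟨_, hk⟩
    · omega
    · exact hk
  have hS : memS d σ := ⟨hbij, hdyck, hpat⟩
  -- J_σ = J
  have hJσ : ((Finset.Icc 1 (d' d - 1)).filter fun j => Jmem d σ j) = J := by
    have hcrit : ∀ j, 1 ≤ j → j ≤ d' d - 1 → (Jmem d σ j ↔ 0 < s j) := by
      intro j hj1 hj2
      obtain ⟨hp1, hp2, hp3⟩ := pos_spec (σ := σ) hbij (show 1 ≤ j by omega)
        (show j ≤ 2 * d' d by omega)
      obtain ⟨hq1, hq2, hq3⟩ := pos_spec (σ := σ) hbij (show 1 ≤ j + 1 by omega)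
        (show j + 1 ≤ 2 * d' d by omega)
      have hkey : key d r s j < key d r s (j + 1) ↔ 0 < s j := by
        rw [key_lt_iff r s (by omega) (by omega) (by omega) (by omega)]
        rw [val_small r s (by omega) (by omega), val_small r s (by omega) (by omega)]
        have hT := Tv_succ s (show j ≤ d' d by omega)
        omega
      unfold Jmem
      rw [← hkey]
      constructor
      · intro h
        have := sorted_chain hsort hp2 h hq3
        rwa [hp1, hq1] at this
      · intro h
        by_contra hc
        push_neg at hc
        rcases Nat.eq_or_lt_of_le hc with heq | hlt
        · have : j + 1 = j := by rw [← hq1, heq, hp1]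
          omega
        · have := sorted_chain hsort hq2 hlt hp3
          rw [hp1, hq1] at this
          omega
    ext j
    simp only [Finset.mem_filter, Finset.mem_Icc]
    constructor
    · rintro ⟨⟨hj1, hj2⟩, hjm⟩
      by_contra hjn
      have := hH4 j hj1 hj2 hjn
      have := (hcrit j hj1 hj2).mp hjm
      omega
    · intro hjJ
      have hjcc := hJ hjJ
      rw [Finset.mem_Icc] at hjcc
      exact ⟨hjcc, (hcrit j hjcc.1 hjcc.2).mpr (hH3 j hjJ)⟩
  exact ⟨σ, ⟨hS, ⟨hI, hS, r, s, hG⟩, hJσ, hbig⟩, hG⟩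
/-- `H_{I,J}` is the disjoint union over `σ ∈ 𝒮_{I,J}` of the sets
`G_{I,σ}`. -/
theorem H_eq_disjoint_union_G (d : ℕ) (hd : 2 ≤ d) (I J : Finset ℕ)
    (hI : I ⊆ Finset.Icc 1 (d - 1)) (hJ : J ⊆ Finset.Icc 1 (d' d - 1)) :
    (∀ r s : ℕ → ℕ, memH d I J r s ↔ ∃ σ, memSIJ d I J σ ∧ memG d I σ r s) ∧
    (∀ σ₁ σ₂ r s, memSIJ d I J σ₁ → memSIJ d I J σ₂ →
      memG d I σ₁ r s → memG d I σ₂ r s →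
      Set.EqOn σ₁ σ₂ (Set.Icc 1 (2 * d' d))) := by
  constructor
  · intro r s
    constructor
    · exact fun hH => H_subset_G hd hI hJ hH
    · rintro ⟨σ, hSIJ, hG⟩
      exact G_subset_H hd hSIJ hG
  · intro σ₁ σ₂ r s h1 h2 g1 g2
    exact G_unique hd h1.1 h2.1 g1 g2

end FreeNilpotent
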